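/- arXiv:1302.5957 — 2 statements merged into one kernel-verified Lean document; each statement's English description precedes it below -/
import Mathlib

section
/- Let G be the group of similarity transformations of ℝ² (generated by rotations, reflections, translations, and positive scalings), acting on the set S of compact connected subsets of ℝ² with positive area and connected complement. Define, for equivalence classes A, B of unit-area representatives, d(A,B) = inf{ρ(a,b) : a ∈ r(A), b ∈ r(B)} where r(A) is the set of unit-area representatives of A and ρ is the Hausdorff distance. Then d satisfies the triangle inequality: d(A,C) ≤ d(A,B) + d(B,C). -/
open Metric Set MeasureTheory
open Pointwise

abbrev E2 := EuclideanSpace ℝ (Fin 2)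

/-- Pre-shapes: compact connected sets with positive area and connected complement. -/
def IsShape (a : Set E2) : Prop :=
  IsCompact a ∧ IsConnected a ∧ 0 < volume a ∧ IsConnected aᶜ

/-- `a` and `b` differ by a similarity transformation of the plane
(rotations, reflections, translations and positive scalings are exactly the
maps multiplying all distances by a fixed positive constant). -/
def SimilarSets (a b : Set E2) : Prop :=
  ∃ c : ℝ, 0 < c ∧ ∃ f : E2 → E2, (∀ x y, dist (f x) (f y) = c * dist x y) ∧ f '' a = b

/-- Unit-area representatives of the similarity class of `A`. -/
def reps (A : Set E2) : Set (Set E2) := {a | volume a = 1 ∧ SimilarSets a A}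

noncomputable def dShape (A B : Set E2) : ℝ :=
  sInf {t : ℝ | ∃ a ∈ reps A, ∃ b ∈ reps B, t = hausdorffDist a b}

lemma finrank_E2 : Module.finrank ℝ E2 = 2 := by simp

/-- decompose a distance-scaling map as scaling ∘ affine isometry equiv -/
lemma exists_decomp {c : ℝ} (hc : 0 < c) {f : E2 → E2}
    (hf : ∀ x y, dist (f x) (f y) = c * dist x y) :
    ∃ g : E2 ≃ᵃⁱ[ℝ] E2, ∀ x, f x = c • g x := by
  have hiso : Isometry (fun x => c⁻¹ • f x) := by
    refine Isometry.of_dist_eq fun x y => ?_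
    rw [dist_smul₀, hf, Real.norm_eq_abs, abs_of_pos (inv_pos.2 hc)]
    field_simp
  let ai : E2 →ᵃⁱ[ℝ] E2 := hiso.affineIsometryOfStrictConvexSpace
  refine ⟨ai.toAffineIsometryEquiv rfl, fun x => ?_⟩
  have h1 : ai.toAffineIsometryEquiv rfl x = c⁻¹ • f x := rfl
  rw [h1, smul_smul, mul_inv_cancel₀ hc.ne', one_smul]

/-- affine isometry equivs preserve volume of measurable sets -/
lemma vol_aie (g : E2 ≃ᵃⁱ[ℝ] E2) {s : Set E2} (hs : MeasurableSet s) :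
    volume (g '' s) = volume s := by
  have hdec : ∀ x, g x = g 0 + g.linearIsometryEquiv x := by
    intro x
    have := g.map_vadd 0 x
    simp only [vadd_eq_add, add_zero] at this
    rw [this, add_comm]
  have himg : g '' s = (g 0 + ·) '' (g.linearIsometryEquiv '' s) := by
    rw [← Set.image_comp]
    exact Set.image_congr fun x _ => hdec x
  have hpre : (g.linearIsometryEquiv '' s) = g.linearIsometryEquiv.symm ⁻¹' s := by
    ext x
    constructor
    · rintro ⟨y, hy, rfl⟩; simpa using hy
    · intro h; exact ⟨_, h, by simp⟩
  rw [himg, show (g 0 + ·) '' (g.linearIsometryEquiv '' s) = g 0 +ᵥ (g.linearIsometryEquiv '' s) from rfl,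
    measure_vadd, hpre,
    g.linearIsometryEquiv.symm.measurePreserving.measure_preimage hs.nullMeasurableSet]

/-- scaling maps have inverses which are scaling maps -/
lemma exists_inverse {c : ℝ} (hc : 0 < c) {f : E2 → E2}
    (hf : ∀ x y, dist (f x) (f y) = c * dist x y) :
    ∃ h : E2 → E2, (∀ x y, dist (h x) (h y) = c⁻¹ * dist x y) ∧
      (∀ x, h (f x) = x) ∧ (∀ x, f (h x) = x) := by
  obtain ⟨g, hg⟩ := exists_decomp hc hf
  refine ⟨fun x => g.symm (c⁻¹ • x), fun x y => ?_, fun x => ?_, fun x => ?_⟩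
  · rw [g.symm.dist_map, dist_smul₀, Real.norm_eq_abs, abs_of_pos (inv_pos.2 hc)]
  · show g.symm (c⁻¹ • f x) = x
    rw [hg, smul_smul, inv_mul_cancel₀ hc.ne', one_smul, g.symm_apply_apply]
  · show f (g.symm (c⁻¹ • x)) = x
    rw [hg, g.apply_symm_apply, smul_smul, mul_inv_cancel₀ hc.ne', one_smul]

lemma vol_image {c : ℝ} (hc : 0 < c) {f : E2 → E2}
    (hf : ∀ x y, dist (f x) (f y) = c * dist x y) {s : Set E2} (hs : MeasurableSet s) :
    volume (f '' s) = ENNReal.ofReal (c ^ 2) * volume s := by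
  obtain ⟨g, hg⟩ := exists_decomp hc hf
  have himg : f '' s = c • (g '' s) := by
    rw [← Set.image_smul, ← Set.image_comp]
    exact Set.image_congr fun x _ => hg x
  rw [himg, Measure.addHaar_smul, vol_aie g hs]
  congr 2
  rw [finrank_E2]
  exact abs_of_nonneg (sq_nonneg c)

lemma similar_compact {a b : Set E2} (h : SimilarSets a b) (hb : IsCompact b) :
    IsCompact a := by
  obtain ⟨c, hc, f, hf, hfab⟩ := h
  obtain ⟨h, hh, hhf, hfh⟩ := exists_inverse hc hf
  have : a = h '' b := by
    rw [← hfab, ← Set.image_comp]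
    have : (h ∘ f) '' a = a := by
      rw [show h ∘ f = id from funext hhf, Set.image_id]
    exact this.symm
  rw [this]
  exact (hb.image ((LipschitzWith.of_dist_le_mul (K := ⟨c⁻¹, (inv_pos.2 hc).le⟩)
    (fun x y => (hh x y).le)).continuous))

lemma similar_symm {a b : Set E2} (h : SimilarSets a b) : SimilarSets b a := by
  obtain ⟨c, hc, f, hf, hfab⟩ := h
  obtain ⟨h, hh, hhf, _⟩ := exists_inverse hc hf
  refine ⟨c⁻¹, inv_pos.2 hc, h, hh, ?_⟩
  rw [← hfab, ← Set.image_comp, show h ∘ f = id from funext hhf, Set.image_id]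

lemma similar_trans {a b c : Set E2} (h1 : SimilarSets a b) (h2 : SimilarSets b c) :
    SimilarSets a c := by
  obtain ⟨k1, hk1, f1, hf1, hab⟩ := h1
  obtain ⟨k2, hk2, f2, hf2, hbc⟩ := h2
  refine ⟨k2 * k1, mul_pos hk2 hk1, f2 ∘ f1, fun x y => ?_, ?_⟩
  · simp [Function.comp, hf2, hf1, mul_assoc]
  · rw [Set.image_comp, hab, hbc]

lemma reps_nonempty {A : Set E2} (hA : IsShape A) : (reps A).Nonempty := by
  obtain ⟨hAc, -, hApos, -⟩ := hA
  have hfin : volume A ≠ ⊤ := hAc.measure_lt_top.ne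
  set v : ℝ := (volume A).toReal with hv
  have hv0 : 0 < v := ENNReal.toReal_pos hApos.ne' hfin
  set c : ℝ := Real.sqrt v with hcdef
  have hc : 0 < c := Real.sqrt_pos.2 hv0
  refine ⟨c⁻¹ • A, ?_, c, hc, (c • ·), fun x y => ?_, ?_⟩
  · rw [Measure.addHaar_smul, finrank_E2]
    have h1 : |c⁻¹ ^ 2| = v⁻¹ := by
      rw [abs_of_nonneg (sq_nonneg _), inv_pow, hcdef, Real.sq_sqrt hv0.le]
    rw [h1, ← ENNReal.ofReal_toReal hfin, ← hv, ← ENNReal.ofReal_mul (inv_nonneg.2 hv0.le),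
      inv_mul_cancel₀ hv0.ne', ENNReal.ofReal_one]
  · rw [dist_smul₀, Real.norm_eq_abs, abs_of_pos hc]
  · rw [Set.image_smul, smul_smul, mul_inv_cancel₀ hc.ne', one_smul]

lemma mem_reps_compact {A a : Set E2} (hA : IsCompact A) (ha : a ∈ reps A) : IsCompact a :=
  similar_compact ha.2 hA

lemma mem_reps_nonempty {A a : Set E2} (ha : a ∈ reps A) : a.Nonempty :=
  nonempty_of_measure_ne_zero (μ := volume) (by rw [ha.1]; exact one_ne_zero)

/-- two unit-volume representatives of the same class differ by an isometric equivalence -/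
lemma reps_unit_isometry {B b b' : Set E2} (hBc : IsCompact B)
    (hb : b ∈ reps B) (hb' : b' ∈ reps B) :
    ∃ g : E2 ≃ᵃⁱ[ℝ] E2, g '' b' = b := by
  obtain ⟨hvb, k, hk, f, hf, hfB⟩ := hb
  obtain ⟨hvb', k', hk', f', hf', hfB'⟩ := hb'
  obtain ⟨h, hh, hhf, _⟩ := exists_inverse hk hf
  set e : E2 → E2 := h ∘ f' with he
  have hescale : ∀ x y, dist (e x) (e y) = (k⁻¹ * k') * dist x y := by
    intro x y; simp only [he, Function.comp, hh, hf', mul_assoc]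
  have heb : e '' b' = b := by
    rw [he, Set.image_comp, hfB', ← hfB, ← Set.image_comp,
      show h ∘ f = id from funext hhf, Set.image_id]
  have hb'm : MeasurableSet b' :=
    (mem_reps_compact hBc ⟨hvb', k', hk', f', hf', hfB'⟩).isClosed.measurableSet
  have hr : 0 < k⁻¹ * k' := mul_pos (inv_pos.2 hk) hk'
  have hvol := vol_image hr hescale hb'm
  rw [heb, hvb, hvb', mul_one] at hvol
  have hr2 : (k⁻¹ * k') ^ 2 = 1 := by
    have := ENNReal.ofReal_eq_one.mp hvol.symm
    linarith
  have hr1 : k⁻¹ * k' = 1 := by nlinarith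
  rw [hr1] at hescale
  simp only [one_mul] at hescale
  obtain ⟨g, hg⟩ := exists_decomp one_pos (fun x y => by rw [hescale, one_mul])
  refine ⟨g, ?_⟩
  rw [← heb]
  exact (Set.image_congr fun x _ => (by rw [hg x, one_smul])).symm

lemma aie_image_mem_reps {C c' : Set E2} (hCc : IsCompact C) (g : E2 ≃ᵃⁱ[ℝ] E2)
    (hc' : c' ∈ reps C) : g '' c' ∈ reps C := by
  obtain ⟨hv, k, hk, f, hf, hfC⟩ := hc'
  have hc'm : MeasurableSet c' :=
    (mem_reps_compact hCc ⟨hv, k, hk, f, hf, hfC⟩).isClosed.measurableSet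
  refine ⟨by rw [vol_aie g hc'm, hv], k, hk, f ∘ g.symm, fun x y => ?_, ?_⟩
  · simp only [Function.comp, hf, g.symm.dist_map]
  · rw [Set.image_comp, ← Set.image_comp _ g, show (⇑g.symm ∘ ⇑g) = id from
      funext fun x => g.symm_apply_apply x, Set.image_id, hfC]

theorem dShape_triangle (A B C : Set E2)
    (hA : IsShape A) (hB : IsShape B) (hC : IsShape C) :
    dShape A C ≤ dShape A B + dShape B C := by
  set SAB := {t : ℝ | ∃ a ∈ reps A, ∃ b ∈ reps B, t = hausdorffDist a b} with hSAB
  set SBC := {t : ℝ | ∃ a ∈ reps B, ∃ b ∈ reps C, t = hausdorffDist a b} with hSBC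
  set SAC := {t : ℝ | ∃ a ∈ reps A, ∃ b ∈ reps C, t = hausdorffDist a b} with hSAC
  obtain ⟨a0, ha0⟩ := reps_nonempty hA
  obtain ⟨b0, hb0⟩ := reps_nonempty hB
  obtain ⟨c0, hc0⟩ := reps_nonempty hC
  have hneAB : SAB.Nonempty := ⟨_, a0, ha0, b0, hb0, rfl⟩
  have hneBC : SBC.Nonempty := ⟨_, b0, hb0, c0, hc0, rfl⟩
  have hbddAC : BddBelow SAC := ⟨0, by rintro t ⟨a, -, c, -, rfl⟩; exact hausdorffDist_nonneg⟩
  -- key estimate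
  have key : ∀ t1 ∈ SAB, ∀ t2 ∈ SBC, dShape A C ≤ t1 + t2 := by
    rintro t1 ⟨a, ha, b, hb, rfl⟩ t2 ⟨b', hb', c', hc', rfl⟩
    obtain ⟨g, hg⟩ := reps_unit_isometry hB.1 hb hb'
    have hgc : g '' c' ∈ reps C := aie_image_mem_reps hC.1 g hc'
    have hbd : hausdorffDist b (g '' c') = hausdorffDist b' c' := by
      rw [← hg, hausdorffDist_image g.isometry]
    have hfin : EMetric.hausdorffEdist a b ≠ ⊤ :=
      hausdorffEdist_ne_top_of_nonempty_of_bounded (mem_reps_nonempty ha)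
        (mem_reps_nonempty hb) (mem_reps_compact hA.1 ha).isBounded
        (mem_reps_compact hB.1 hb).isBounded
    have htri : hausdorffDist a (g '' c') ≤
        hausdorffDist a b + hausdorffDist b (g '' c') :=
      hausdorffDist_triangle hfin
    have hmem : hausdorffDist a (g '' c') ∈ SAC := ⟨a, ha, g '' c', hgc, rfl⟩
    calc dShape A C ≤ hausdorffDist a (g '' c') := csInf_le hbddAC hmem
      _ ≤ hausdorffDist a b + hausdorffDist b' c' := by rw [← hbd]; exact htri
  have h2 : ∀ t1 ∈ SAB, dShape A C - t1 ≤ dShape B C := by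
    intro t1 ht1
    exact le_csInf hneBC fun t2 ht2 => by linarith [key t1 ht1 t2 ht2]
  have h3 : dShape A C - dShape B C ≤ dShape A B := by
    exact le_csInf hneAB fun t1 ht1 => by linarith [h2 t1 ht1]
  linarith
end

section
/- For a fixed compact nonempty set a ⊆ ℝ², the function ε ↦ vol(O^ε(a)) is continuous on (0, ∞). -/
open scoped Topology
open MeasureTheory Metric Set Filter EMetric
open scoped ENNReal NNReal

local notation "E2" => EuclideanSpace ℝ (Fin 2)

lemma level_set_null (a : Set (EuclideanSpace ℝ (Fin 2)))
    (ha : IsCompact a) (hne : a.Nonempty) {ε : ℝ} (hε : 0 < ε) :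
    volume {x : EuclideanSpace ℝ (Fin 2) | Metric.infDist x a = ε} = 0 := by
  set S : Set E2 := {x : E2 | Metric.infDist x a = ε} with hSdef
  set c : ℝ≥0∞ := volume (Metric.ball (0 : E2) 1) with hcdef
  have hc0 : c ≠ 0 := (measure_ball_pos volume 0 one_pos).ne'
  have hctop : c ≠ ⊤ := measure_ball_lt_top.ne
  have hrank : Module.finrank ℝ E2 = 2 := finrank_euclideanSpace_fin
  -- density bound at every point of S
  have key : ∀ x ∈ S, ∀ r : ℝ, 0 < r → r ≤ ε →
      volume (S ∩ Metric.closedBall x r) / volume (Metric.closedBall x r)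
        ≤ ENNReal.ofReal (3/4) := by
    intro x hx r hr hrε
    obtain ⟨y, hy, hxy⟩ := ha.exists_infDist_eq_dist hne x
    have hdxy : dist x y = ε := by rw [← hxy]; exact hx
    have hεne : (2:ℝ) * ε ≠ 0 := by positivity
    set t : ℝ := r / (2 * ε) with htdef
    have ht0 : 0 ≤ t := by positivity
    have ht1 : t ≤ 1 := by
      rw [htdef, div_le_one (by positivity)]
      nlinarith
    set z : E2 := x + t • (y - x) with hzdef
    have hnorm : ‖y - x‖ = ε := by rw [← dist_eq_norm, dist_comm y x, hdxy]
    have hzx : dist z x = r / 2 := by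
      rw [dist_eq_norm, hzdef, add_sub_cancel_left, norm_smul, hnorm,
        Real.norm_eq_abs, abs_of_nonneg ht0, htdef]
      field_simp
    have hzy : dist z y = ε - r / 2 := by
      have hzy' : z - y = (t - 1) • (y - x) := by
        rw [hzdef]; module
      rw [dist_eq_norm, hzy', norm_smul, hnorm, Real.norm_eq_abs,
        abs_of_nonpos (by linarith), htdef]
      field_simp
      ring
    have hball_sub : Metric.ball z (r/2) ⊆ Metric.closedBall x r := by
      intro w hw
      have := dist_triangle w z x
      simp only [Metric.mem_ball] at hw
      simp only [Metric.mem_closedBall]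
      linarith [hw, hzx ▸ this]
    have hball_disj : Metric.ball z (r/2) ∩ S = ∅ := by
      ext w
      simp only [mem_inter_iff, Metric.mem_ball, mem_empty_iff_false, iff_false, not_and]
      intro hw hwS
      have h1 : dist w y ≤ dist w z + dist z y := dist_triangle w z y
      have h2 : Metric.infDist w a ≤ dist w y := Metric.infDist_le_dist_of_mem hy
      have : Metric.infDist w a < ε := by rw [hzy] at h1; linarith
      exact this.ne hwS
    have hsub : S ∩ Metric.closedBall x r ⊆ Metric.closedBall x r \ Metric.ball z (r/2) := by
      intro w ⟨hwS, hwB⟩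
      refine ⟨hwB, fun hwb => ?_⟩
      have : w ∈ Metric.ball z (r/2) ∩ S := ⟨hwb, hwS⟩
      simp [hball_disj] at this
    have hvol_cb : volume (Metric.closedBall x r) = ENNReal.ofReal (r ^ 2) * c := by
      rw [hcdef, Measure.addHaar_closedBall volume x hr.le, hrank]
    have hvol_b : volume (Metric.ball z (r/2)) = ENNReal.ofReal ((r/2) ^ 2) * c := by
      rw [hcdef, Measure.addHaar_ball volume z (by positivity : (0:ℝ) ≤ r/2), hrank]
    rw [ENNReal.div_le_iff
      (by rw [hvol_cb]; exact mul_ne_zero (ENNReal.ofReal_pos.2 (by positivity)).ne' hc0)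
      (measure_closedBall_lt_top.ne)]
    calc volume (S ∩ Metric.closedBall x r)
        ≤ volume (Metric.closedBall x r \ Metric.ball z (r/2)) := measure_mono hsub
      _ = volume (Metric.closedBall x r) - volume (Metric.ball z (r/2)) :=
          measure_diff (hball_sub.trans (subset_refl _))
            measurableSet_ball.nullMeasurableSet measure_ball_lt_top.ne
      _ = ENNReal.ofReal (r ^ 2) * c - ENNReal.ofReal ((r/2) ^ 2) * c := by
          rw [hvol_cb, hvol_b]
      _ = (ENNReal.ofReal (r ^ 2) - ENNReal.ofReal ((r/2) ^ 2)) * c := by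
          rw [ENNReal.sub_mul (fun _ _ => hctop)]
      _ = ENNReal.ofReal (3/4 * r ^ 2) * c := by
          rw [← ENNReal.ofReal_sub _ (by positivity)]
          congr 1
          ring_nf
      _ = ENNReal.ofReal (3/4) * volume (Metric.closedBall x r) := by
          rw [hvol_cb, ← mul_assoc, ← ENNReal.ofReal_mul (by norm_num)]
  -- Lebesgue density
  have hD := Besicovitch.ae_tendsto_measure_inter_div (volume : Measure E2) S
  have hnoP : ∀ x ∈ S, ¬ Tendsto
      (fun r => volume (S ∩ Metric.closedBall x r) / volume (Metric.closedBall x r))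
      (𝓝[>] (0:ℝ)) (𝓝 1) := by
    intro x hx htd
    have hev : ∀ᶠ r in 𝓝[>] (0:ℝ),
        volume (S ∩ Metric.closedBall x r) / volume (Metric.closedBall x r)
          ≤ ENNReal.ofReal (3/4) := by
      filter_upwards [Ioc_mem_nhdsGT_of_mem ⟨le_refl (0:ℝ), hε⟩] with r hr
      exact key x hx r hr.1 hr.2
    have : (1 : ℝ≥0∞) ≤ ENNReal.ofReal (3/4) := le_of_tendsto htd hev
    have h34 : ENNReal.ofReal (3/4 : ℝ) < 1 := by
      rw [ENNReal.ofReal_lt_one]; norm_num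
    exact absurd this h34.not_ge
  have hbad : (volume.restrict S) {x : E2 | ¬ Tendsto (fun r => volume (S ∩ Metric.closedBall x r) / volume (Metric.closedBall x r)) (𝓝[>] (0:ℝ)) (𝓝 1)} = 0 := hD
  have hSsub : S ⊆ {x : E2 | ¬ Tendsto (fun r => volume (S ∩ Metric.closedBall x r) / volume (Metric.closedBall x r)) (𝓝[>] (0:ℝ)) (𝓝 1)} := fun x hx => hnoP x hx
  rw [← Measure.restrict_apply_superset hSsub, hbad]

lemma vol_cthickening_eq_thickening (a : Set (EuclideanSpace ℝ (Fin 2)))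
    (ha : IsCompact a) (hne : a.Nonempty) {ε : ℝ} (hε : 0 < ε) :
    volume (cthickening ε a) = volume (thickening ε a) := by
  refine le_antisymm ?_ (measure_mono (thickening_subset_cthickening ε a))
  have hsub : cthickening ε a ⊆ thickening ε a ∪ {x : E2 | Metric.infDist x a = ε} := by
    intro x hx
    rcases lt_or_eq_of_le (mem_cthickening_iff.1 hx) with h | h
    · exact Or.inl (mem_thickening_iff_infEdist_lt.2 h)
    · refine Or.inr ?_
      have : Metric.infDist x a = (ENNReal.ofReal ε).toReal := by
        rw [Metric.infDist, h]
      simpa [ENNReal.toReal_ofReal hε.le] using this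
  calc volume (cthickening ε a)
      ≤ volume (thickening ε a ∪ {x : E2 | Metric.infDist x a = ε}) := measure_mono hsub
    _ ≤ volume (thickening ε a) + volume {x : E2 | Metric.infDist x a = ε} := measure_union_le _ _
    _ = volume (thickening ε a) := by rw [level_set_null a ha hne hε, add_zero]

theorem vol_thickening_continuous (a : Set (EuclideanSpace ℝ (Fin 2)))
    (ha : IsCompact a) (hne : a.Nonempty) :
    ContinuousOn (fun ε : ℝ => (volume (cthickening ε a)).toReal) (Set.Ioi 0) := by
  intro ε₀ hε₀
  rw [Set.mem_Ioi] at hε₀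
  have hfin : ∀ δ : ℝ, volume (cthickening δ a) ≠ ⊤ :=
    fun δ => (ha.cthickening).measure_lt_top.ne
  have hmain : Tendsto (fun ε : ℝ => volume (cthickening ε a)) (𝓝[Set.Ioi 0] ε₀)
      (𝓝 (volume (cthickening ε₀ a))) := by
    rw [tendsto_order]
    constructor
    · -- from below
      intro b hb
      set v : ℕ → ℝ := fun n => ε₀ - ε₀ / (n + 2) with hv
      have hvmono : Monotone v := by
        intro m n hmn
        have : ε₀ / (n + 2) ≤ ε₀ / (m + 2) := by
          gcongr
        simp only [hv]
        linarith
      have hvlt : ∀ n, v n < ε₀ := by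
        intro n
        have : 0 < ε₀ / (n + 2) := by positivity
        simp only [hv]; linarith
      have hvpos : ∀ n, 0 < v n := by
        intro n
        have h2 : ε₀ / (n + 2) < ε₀ := by
          rw [div_lt_iff₀ (by positivity)]
          nlinarith [hε₀]
        simp only [hv]; linarith
      have hUnion : (⋃ n, cthickening (v n) a) = thickening ε₀ a := by
        apply subset_antisymm
        · exact Set.iUnion_subset fun n => cthickening_subset_thickening' hε₀ (hvlt n) a
        · intro x hx
          have hd : Metric.infDist x a < ε₀ := (mem_thickening_iff_infDist_lt hne).1 hx
          have hd0 : 0 ≤ Metric.infDist x a := Metric.infDist_nonneg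
          obtain ⟨n, hn⟩ := exists_nat_gt (ε₀ / (ε₀ - Metric.infDist x a))
          have hpos : 0 < ε₀ - Metric.infDist x a := by linarith
          have hlt : ε₀ / (n + 2 : ℝ) < ε₀ - Metric.infDist x a := by
            rw [div_lt_iff₀ (by positivity)]
            rw [div_lt_iff₀ hpos] at hn
            nlinarith [hpos, hn]
          have hle : Metric.infDist x a ≤ v n := by simp only [hv]; linarith
          refine Set.mem_iUnion.2 ⟨n, ?_⟩
          rw [mem_cthickening_iff]
          rw [ENNReal.le_ofReal_iff_toReal_le (infEdist_ne_top hne) (hvpos n).le]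
          exact hle
      have htd : Tendsto (fun n => volume (cthickening (v n) a)) atTop
          (𝓝 (volume (thickening ε₀ a))) := by
        have := tendsto_measure_iUnion_atTop (μ := (volume : Measure E2))
          (s := fun n => cthickening (v n) a) (fun m n h => cthickening_mono (hvmono h) a)
        rwa [hUnion] at this
      have hb' : b < volume (thickening ε₀ a) := by
        rwa [← vol_cthickening_eq_thickening a ha hne hε₀]
      obtain ⟨n, hn⟩ := (htd.eventually (eventually_gt_nhds hb')).exists
      have hmem : Set.Ioi (v n) ∈ 𝓝[Set.Ioi 0] ε₀ :=
        nhdsWithin_le_nhds (Ioi_mem_nhds (hvlt n))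
      filter_upwards [hmem] with ε hε
      exact hn.trans_le (measure_mono (cthickening_mono (le_of_lt hε) a))
    · -- from above
      intro b hb
      set w : ℕ → ℝ := fun n => ε₀ + 1 / (n + 1) with hw
      have hwanti : Antitone w := by
        intro m n hmn
        have : (1:ℝ) / (n + 1) ≤ 1 / (m + 1) := by
          gcongr
        simp only [hw]; linarith
      have hwgt : ∀ n, ε₀ < w n := by
        intro n
        have : 0 < (1:ℝ) / (n + 1) := by positivity
        simp only [hw]; linarith
      have hInter : (⋂ n, cthickening (w n) a) = cthickening ε₀ a := by
        apply subset_antisymm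
        · intro x hx
          rw [mem_cthickening_iff]
          have hwt : Tendsto (fun n : ℕ => ENNReal.ofReal (w n)) atTop
              (𝓝 (ENNReal.ofReal ε₀)) := by
            apply ENNReal.tendsto_ofReal
            simp only [hw]
            have : Tendsto (fun n : ℕ => 1 / ((n : ℝ) + 1)) atTop (𝓝 0) :=
              tendsto_one_div_add_atTop_nhds_zero_nat
            simpa using tendsto_const_nhds.add this
          refine ge_of_tendsto hwt (Filter.Eventually.of_forall fun n => ?_)
          exact mem_cthickening_iff.1 (Set.mem_iInter.1 hx n)
        · exact Set.subset_iInter fun n => cthickening_mono (hwgt n).le a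
      have htd : Tendsto (fun n => volume (cthickening (w n) a)) atTop
          (𝓝 (volume (cthickening ε₀ a))) := by
        have := tendsto_measure_iInter_atTop (μ := (volume : Measure E2))
          (s := fun n => cthickening (w n) a)
          (fun n => isClosed_cthickening.measurableSet.nullMeasurableSet)
          (fun m n h => cthickening_mono (hwanti h) a) ⟨0, hfin _⟩
        rwa [hInter] at this
      obtain ⟨n, hn⟩ := (htd.eventually (eventually_lt_nhds hb)).exists
      have hmem : Set.Iio (w n) ∈ 𝓝[Set.Ioi 0] ε₀ :=
        nhdsWithin_le_nhds (Iio_mem_nhds (hwgt n))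
      filter_upwards [hmem] with ε hε
      exact (measure_mono (cthickening_mono hε.le a)).trans_lt hn
  exact (ENNReal.tendsto_toReal (hfin ε₀)).comp hmain
end
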